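/- Let (n_i) be a sequence of integers with n_i ≥ 2. For the tower ℤ ← ℤ ← ⋯ with bonding maps multiplication by n_i, lim¹ is nontrivial; in fact the map d : ∏ℤ → ∏ℤ, (a_i) ↦ (a_i − n_i a_{i+1}), is not surjective. -/
import Mathlib

/-- An enumeration of the integers. -/
def lim1Enum : ℕ → ℤ := fun k => (Denumerable.eqv ℤ).symm k

/-- State `(S k, N k)` where `N k = ∏_{i<k} n i` and `S k = ∑_{i<k} N i * b i`
for the diagonal choice of `b`. -/
def lim1St (n : ℕ → ℤ) : ℕ → ℤ × ℤ
  | 0 => (0, 1)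
  | k + 1 =>
    let p := lim1St n k
    let b := if p.2 ∣ (lim1Enum k - p.1) then (lim1Enum k - p.1) / p.2 + 1 else 0
    (p.1 + p.2 * b, p.2 * n k)

/-- The diagonal target sequence. -/
def lim1B (n : ℕ → ℤ) (k : ℕ) : ℤ :=
  if (lim1St n k).2 ∣ (lim1Enum k - (lim1St n k).1) then
    (lim1Enum k - (lim1St n k).1) / (lim1St n k).2 + 1 else 0

lemma lim1St_fst_succ (n : ℕ → ℤ) (k : ℕ) :
    (lim1St n (k + 1)).1 = (lim1St n k).1 + (lim1St n k).2 * lim1B n k := rfl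

lemma lim1St_snd_succ (n : ℕ → ℤ) (k : ℕ) :
    (lim1St n (k + 1)).2 = (lim1St n k).2 * n k := rfl

lemma lim1St_snd_pos (n : ℕ → ℤ) (hn : ∀ i, 2 ≤ n i) (k : ℕ) :
    0 < (lim1St n k).2 := by
  induction k with
  | zero => exact one_pos
  | succ k ih =>
    rw [lim1St_snd_succ]
    have := hn k
    positivity

/-- for the tower `ℤ ← ℤ ← ⋯` with bonding maps multiplication by
`n i ≥ 2`, `lim¹` is nontrivial: the map `(aᵢ) ↦ (aᵢ − nᵢ·aᵢ₊₁)` is not surjective. -/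
theorem lim1_int_nontrivial (n : ℕ → ℤ) (hn : ∀ i, 2 ≤ n i) :
    ¬ Function.Surjective (fun a : ℕ → ℤ => fun i => a i - n i * a (i + 1)) := by
  intro hsurj
  obtain ⟨a, ha⟩ := hsurj (lim1B n)
  have ha' : ∀ i, a i - n i * a (i + 1) = lim1B n i := fun i => congrFun ha i
  -- invariant: a 0 = S k + N k * a k
  have key : ∀ k, a 0 = (lim1St n k).1 + (lim1St n k).2 * a k := by
    intro k
    induction k with
    | zero => simp [lim1St]
    | succ k ih =>
      rw [lim1St_fst_succ, lim1St_snd_succ]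
      have h := ha' k
      have hak : a k = lim1B n k + n k * a (k + 1) := by linarith
      rw [ih, hak]; ring
  set k := Denumerable.eqv ℤ (a 0) with hk
  have he : lim1Enum k = a 0 := by
    simp [lim1Enum, hk]
  have hN : (0:ℤ) < (lim1St n k).2 := lim1St_snd_pos n hn k
  have hdiff : lim1Enum k - (lim1St n k).1 = (lim1St n k).2 * a k := by
    rw [he, key k]; ring
  have hdvd : (lim1St n k).2 ∣ (lim1Enum k - (lim1St n k).1) := ⟨a k, hdiff⟩
  have hb : lim1B n k = a k + 1 := by
    rw [lim1B, if_pos hdvd, hdiff, Int.mul_ediv_cancel_left _ hN.ne']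
  have h := ha' k
  rw [hb] at h
  have hmul : n k * a (k + 1) = -1 := by linarith
  have hdvd1 : n k ∣ (1:ℤ) := (dvd_neg).mp ⟨a (k + 1), hmul.symm⟩
  have := Int.le_of_dvd one_pos hdvd1
  linarith [hn k]
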